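/- Every κ ∈ W (i.e., every linear map κ : Λ²V* → Λ²V* with u ∧ κ(v) = −κ(u) ∧ v for all 2-forms u,v on a 4-dimensional real vector space V) automatically has trace zero. -/
import Mathlib


open Matrix

noncomputable section

/-- The Levi-Civita permutation symbol on four indices in `{0,1,2,3}`. -/
def eps (i j k l : Fin 4) : ℝ :=
  (((j : ℕ) : ℝ) - ((i : ℕ) : ℝ)) * (((k : ℕ) : ℝ) - ((i : ℕ) : ℝ)) *
    (((l : ℕ) : ℝ) - ((i : ℕ) : ℝ)) * (((k : ℕ) : ℝ) - ((j : ℕ) : ℝ)) *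
    (((l : ℕ) : ℝ) - ((j : ℕ) : ℝ)) * (((l : ℕ) : ℝ) - ((k : ℕ) : ℝ)) / 12

/-- First indices of the ordered pairs `O = {01, 02, 03, 23, 31, 12}`. -/
def p1 : Fin 6 → Fin 4 := ![0, 0, 0, 2, 3, 1]

/-- Second indices of the ordered pairs `O = {01, 02, 03, 23, 31, 12}`. -/
def p2 : Fin 6 → Fin 4 := ![1, 2, 3, 3, 1, 2]

/-- The `6 × 6` matrix `(ε^{IJ})_{I,J ∈ O}` representing the wedge product
pairing of 2-forms in the basis `{dx^I}`. -/
def Bmat : Matrix (Fin 6) (Fin 6) ℝ :=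
  Matrix.of fun I J => eps (p1 I) (p2 I) (p1 J) (p2 J)

/-- The wedge product `u ∧ v ∈ Λ⁴(ℝ⁴)*` of two 2-forms given by their
components in the basis `{dx^I : I ∈ O}`, as a multiple of the volume form. -/
def wedge6 (u v : Fin 6 → ℝ) : ℝ := u ⬝ᵥ (Bmat *ᵥ v)

/-- Every skewon, i.e. every endomorphism `κ` of `Λ²(ℝ⁴)*` (represented as a
`6 × 6` matrix in the basis `{dx^I : I ∈ O}`) with `u ∧ κ(v) = −κ(u) ∧ v` for
all 2-forms `u, v`, automatically has trace zero. -/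

lemma Bmat_eq : Bmat = !![0,0,0,1,0,0; 0,0,0,0,1,0; 0,0,0,0,0,1;
    1,0,0,0,0,0; 0,1,0,0,0,0; 0,0,1,0,0,0] := by
  ext i j
  fin_cases i <;> fin_cases j <;>
    norm_num [Bmat, eps, p1, p2, show ((3:Fin 4):ℕ)=3 from rfl]

set_option maxHeartbeats 1600000 in
lemma hBB : Bmat * Bmat = 1 := by
  ext i j
  rw [Bmat_eq]
  fin_cases i <;> fin_cases j <;>
    norm_num [Matrix.mul_apply, Fin.sum_univ_succ, Matrix.one_apply, Fin.ext_iff]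

theorem skewon_traceless (κ : Matrix (Fin 6) (Fin 6) ℝ)
    (hκ : ∀ u v : Fin 6 → ℝ, wedge6 u (κ *ᵥ v) = -wedge6 (κ *ᵥ u) v) :
    κ.trace = 0 := by
  have key : Bmat * κ = -(κᵀ * Bmat) := by
    ext i j
    have h := hκ (Pi.single i 1) (Pi.single j 1)
    simp only [wedge6, Matrix.mulVec_single, mul_one, single_dotProduct, one_mul] at h
    simpa [Matrix.mul_apply, Matrix.mulVec, dotProduct, Matrix.transpose_apply,
      Matrix.neg_apply] using h
  have hk : κ = -(Bmat * (κᵀ * Bmat)) := by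
    calc κ = Bmat * Bmat * κ := by rw [hBB, Matrix.one_mul]
    _ = Bmat * (Bmat * κ) := by rw [Matrix.mul_assoc]
    _ = -(Bmat * (κᵀ * Bmat)) := by rw [key, Matrix.mul_neg]
  have ht : κ.trace = -κ.trace := by
    conv_lhs => rw [hk]
    rw [Matrix.trace_neg, Matrix.trace_mul_comm, Matrix.mul_assoc, hBB, Matrix.mul_one,
      Matrix.trace_transpose]
  linarith
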